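/- Let n ≥ 1, let S ⊆ ℝⁿ be a nonempty closed set, and let x ∉ S. If the distance function z ↦ dist(z, S) has a gradient g at x (i.e., it is Fréchet differentiable at x with gradient g), then ‖g‖ = 1 and the point y = x − dist(x, S)·g lies in S and satisfies ‖x − y‖ = dist(x, S); in particular, y is a closest point of S to x. -/

import Mathlib

/-!
Let `s` be a nearest point of `S` to `x` (closed sets in finite dimension have one). Along the
segment from `x` to `s` the distance to `S` decreases at unit speed, so `⟪g, x - s⟫ = ‖x - s‖`.
Since `infDist · S` is 1-Lipschitz, `‖g‖ ≤ 1`, and the equality case of Cauchy–Schwarz forces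
`g = (x - s) / ‖x - s‖`.
-/

open Metric Set AffineMap

section NormedSpace

variable {E : Type*} [NormedAddCommGroup E] [NormedSpace ℝ E] {S : Set E} {x s : E}

theorem infDist_lineMap_of_infDist_eq_dist (hs : s ∈ S) (hxs : infDist x S = dist x s)
    {t : ℝ} (ht : t ∈ Icc (0 : ℝ) 1) : infDist (lineMap x s t) S = (1 - t) * dist x s := by
  have h_to_s : dist (lineMap x s t) s = (1 - t) * dist x s := by
    rw [dist_lineMap_right, Real.norm_of_nonneg (sub_nonneg.2 ht.2)]
  have h_from_x : dist x (lineMap x s t) = t * dist x s := by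
    rw [dist_left_lineMap, Real.norm_of_nonneg ht.1]
  refine le_antisymm (h_to_s ▸ infDist_le_dist_of_mem hs) ?_
  have := infDist_le_infDist_add_dist (x := x) (y := lineMap x s t) (s := S)
  linarith

theorem HasFDerivAt.infDist_apply_sub_of_infDist_eq_dist {f' : StrongDual ℝ E}
    (hf : HasFDerivAt (infDist · S) f' x) (hs : s ∈ S) (hxs : infDist x S = dist x s) :
    f' (s - x) = -dist x s := by
  have hline :
      HasDerivWithinAt (fun t : ℝ => infDist (lineMap x s t) S) (f' (s - x)) (Ici 0) 0 := by
    have hf0 : HasFDerivAt (infDist · S) f' (lineMap x s (0 : ℝ)) := by rwa [lineMap_apply_zero]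
    exact (hf0.comp_hasDerivAt (0 : ℝ) hasDerivAt_lineMap).hasDerivWithinAt
  have hexact :
      HasDerivWithinAt (fun t : ℝ => infDist (lineMap x s t) S) (-dist x s) (Ici 0) 0 := by
    have hlin : HasDerivWithinAt (fun t : ℝ => (1 - t) * dist x s) (-dist x s) (Ici 0) 0 := by
      simpa using ((hasDerivAt_id (0 : ℝ)).const_sub 1).mul_const (dist x s) |>.hasDerivWithinAt
    refine hlin.congr_of_eventuallyEq ?_ (by simpa using hxs)
    filter_upwards [inter_mem_nhdsWithin (Ici (0 : ℝ)) (Iio_mem_nhds one_pos)] with t ht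
    exact infDist_lineMap_of_infDist_eq_dist hs hxs ⟨ht.1, le_of_lt ht.2⟩
  exact (uniqueDiffWithinAt_Ici 0).eq_deriv _ hline hexact

end NormedSpace

section InnerProductSpace

variable {E : Type*} [NormedAddCommGroup E] [InnerProductSpace ℝ E]

theorem norm_eq_one_and_smul_eq_of_inner_eq_norm {g v : E} (hg : ‖g‖ ≤ 1)
    (hgv : inner ℝ g v = ‖v‖) (hv : v ≠ 0) : ‖g‖ = 1 ∧ ‖v‖ • g = v := by
  have hv_pos : 0 < ‖v‖ := norm_pos_iff.2 hv
  have hg_ge : 1 ≤ ‖g‖ := by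
    have := real_inner_le_norm g v
    nlinarith
  have hg_one : ‖g‖ = 1 := le_antisymm hg hg_ge
  refine ⟨hg_one, ?_⟩
  have := inner_eq_norm_mul_iff_real.1 (by rw [hgv, hg_one, one_mul] : inner ℝ g v = ‖g‖ * ‖v‖)
  rwa [hg_one, one_smul] at this

theorem HasGradientAt.infDist_smul_eq_sub [CompleteSpace E] {S : Set E} {x s g : E}
    (hg : HasGradientAt (infDist · S) g x) (hs : s ∈ S) (hxs : infDist x S = dist x s)
    (hx : x ∉ S) : ‖g‖ = 1 ∧ infDist x S • g = x - s := by
  have hg_le : ‖g‖ ≤ 1 := by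
    simpa using hg.hasFDerivAt.le_of_lipschitz (lipschitz_infDist_pt S)
  have hgv : inner ℝ g (x - s) = ‖x - s‖ := by
    have := hg.hasFDerivAt.infDist_apply_sub_of_infDist_eq_dist hs hxs
    rw [InnerProductSpace.toDual_apply_apply, ← neg_sub, inner_neg_right, dist_eq_norm] at this
    linarith
  rw [hxs, dist_eq_norm]
  exact norm_eq_one_and_smul_eq_of_inner_eq_norm hg_le hgv
    (sub_ne_zero.2 (ne_of_mem_of_not_mem hs hx).symm)

end InnerProductSpace

theorem gradient_distance_closest_point_general {n : ℕ}
    (S : Set (EuclideanSpace ℝ (Fin n))) (hS : S.Nonempty) (hSc : IsClosed S)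
    (x : EuclideanSpace ℝ (Fin n)) (hx : x ∉ S)
    (g : EuclideanSpace ℝ (Fin n))
    (hg : HasGradientAt (fun z => infDist z S) g x) :
    ‖g‖ = 1 ∧ (x - infDist x S • g) ∈ S ∧
      ‖x - (x - infDist x S • g)‖ = infDist x S := by
  obtain ⟨s, hs, hxs⟩ := hSc.exists_infDist_eq_dist hS x
  obtain ⟨hg_norm, hdg⟩ := hg.infDist_smul_eq_sub hs hxs hx
  rw [hdg, sub_sub_cancel, hxs, dist_eq_norm]
  exact ⟨hg_norm, hs, rfl⟩

/-- If the distance function to a nonempty closed set `S ⊆ ℝⁿ` has a gradient `g` at a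
point `x ∉ S`, then `‖g‖ = 1` and `y = x − dist(x,S)·g` is a closest point of `S` to `x`. -/
theorem gradient_distance_closest_point {n : ℕ} (hn : 1 ≤ n)
    (S : Set (EuclideanSpace ℝ (Fin n))) (hS : S.Nonempty) (hSc : IsClosed S)
    (x : EuclideanSpace ℝ (Fin n)) (hx : x ∉ S)
    (g : EuclideanSpace ℝ (Fin n))
    (hg : HasGradientAt (fun z => infDist z S) g x) :
    ‖g‖ = 1 ∧ (x - infDist x S • g) ∈ S ∧
      ‖x - (x - infDist x S • g)‖ = infDist x S :=
  gradient_distance_closest_point_general S hS hSc x hx g hg
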